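/- arXiv:2009.00373 — 2 statements merged into one kernel-verified Lean document; each statement's English description precedes it below -/
import Mathlib

section
/- With L, d, D, R, F as above (F(S) = ω·Σ_{l∈S} R(l) + (1−ω)·D(S), 0 < ω < 1), let S ⊆ L with |S| ≥ 2, let S_R = L \ S, and let S' ⊆ S_R with |S'| = m ≥ 1. Then F(S ∪ S') ≤ F(S) + ω · R_max + (1−ω) · D_max, where R_max is the sum of the m largest values of R over S_R and D_max is the sum of the m largest values of x ↦ min_{l ∈ S} d(x, l) over S_R. -/
open Finset

noncomputable def dmin {L : Type*} [DecidableEq L] (d : L → L → ℝ) (x : L) (T : Finset L) : ℝ :=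
  sInf ((T.image (d x) : Finset ℝ) : Set ℝ)

noncomputable def aggDiv {L : Type*} [DecidableEq L] (d : L → L → ℝ) (S : Finset L) : ℝ :=
  ∑ l ∈ S, dmin d l (S.erase l)

noncomputable def topSum {L : Type*} (SR : Finset L) (m : ℕ) (f : L → ℝ) : ℝ :=
  sSup { s : ℝ | ∃ T : Finset L, T ⊆ SR ∧ T.card = m ∧ s = ∑ l ∈ T, f l }

/-
Adding S' to S raises the relevance part by exactly the relevance of S', which is at most the
top-m relevance sum. In the diversity part, enlarging the set can only lower each minimum
distance: the terms of S are bounded by their old values, and each new point's nearest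
neighbour in S ∪ S' is at most as far as its nearest neighbour in S, so the new terms are at
most the top-m diversity-to-S sum.
-/

section

variable {L : Type*} [DecidableEq L]

lemma dmin_le_dmin_of_subset (d : L → L → ℝ) (x : L) {T T' : Finset L} (h : T ⊆ T')
    (hT : T.Nonempty) : dmin d x T' ≤ dmin d x T :=
  csInf_le_csInf (T'.image (d x)).finite_toSet.bddBelow (coe_nonempty.mpr (hT.image _))
    (by exact_mod_cast image_subset_image h)

lemma aggDiv_union_le (d : L → L → ℝ) {S S' : Finset L} (hS : 2 ≤ S.card)
    (hdisj : Disjoint S S') :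
    aggDiv d (S ∪ S') ≤ aggDiv d S + ∑ l ∈ S', dmin d l S := by
  have hSne : S.Nonempty := card_pos.mp (by omega)
  have hold : ∑ l ∈ S, dmin d l ((S ∪ S').erase l) ≤ aggDiv d S := by
    refine sum_le_sum fun l hl => dmin_le_dmin_of_subset d l
      (erase_subset_erase _ subset_union_left) ?_
    have := card_erase_of_mem hl
    exact card_pos.mp (by omega)
  have hnew : ∑ l ∈ S', dmin d l ((S ∪ S').erase l) ≤ ∑ l ∈ S', dmin d l S :=
    sum_le_sum fun l hl => dmin_le_dmin_of_subset d l
      (subset_erase.mpr ⟨subset_union_left, disjoint_right.mp hdisj hl⟩) hSne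
  rw [aggDiv, sum_union hdisj]
  exact add_le_add hold hnew

end

lemma sum_le_topSum {L : Type*} {SR T : Finset L} {m : ℕ} (f : L → ℝ) (hT : T ⊆ SR)
    (hcard : T.card = m) : ∑ l ∈ T, f l ≤ topSum SR m f := by
  refine le_csSup ?_ ⟨T, hT, hcard, rfl⟩
  refine (SR.powerset.image fun T => ∑ l ∈ T, f l).finite_toSet.subset ?_ |>.bddAbove
  rintro s ⟨T, hT, _, rfl⟩
  exact mem_coe.mpr (mem_image.mpr ⟨T, mem_powerset.mpr hT, rfl⟩)

theorem stmt7_general {L : Type*} [Fintype L] [DecidableEq L] (d : L → L → ℝ)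
    (R : L → ℝ) (ω : ℝ) (hω0 : 0 < ω) (hω1 : ω < 1)
    (S S' : Finset L) (hS : 2 ≤ S.card) (hS' : S' ⊆ Sᶜ) (m : ℕ)
    (hcard : S'.card = m) :
    ω * ∑ l ∈ S ∪ S', R l + (1 - ω) * aggDiv d (S ∪ S') ≤
      (ω * ∑ l ∈ S, R l + (1 - ω) * aggDiv d S) +
        ω * topSum Sᶜ m R + (1 - ω) * topSum Sᶜ m (fun x => dmin d x S) := by
  have hdisj : Disjoint S S' := disjoint_left.mpr fun _ ha ha' => mem_compl.mp (hS' ha') ha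
  have hR := sum_le_topSum R hS' hcard
  have hD := (aggDiv_union_le d hS hdisj).trans
    (add_le_add_right (sum_le_topSum (fun x => dmin d x S) hS' hcard) _)
  have hω1' : 0 ≤ 1 - ω := by linarith
  calc ω * ∑ l ∈ S ∪ S', R l + (1 - ω) * aggDiv d (S ∪ S')
      = ω * (∑ l ∈ S, R l + ∑ l ∈ S', R l) + (1 - ω) * aggDiv d (S ∪ S') := by
        rw [sum_union hdisj]
    _ ≤ ω * (∑ l ∈ S, R l + topSum Sᶜ m R) +
          (1 - ω) * (aggDiv d S + topSum Sᶜ m (fun x => dmin d x S)) := by gcongr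
    _ = _ := by ring

theorem stmt7 {L : Type*} [Fintype L] [DecidableEq L] (d : L → L → ℝ)
    (hsym : ∀ a b, d a b = d b a) (hnn : ∀ a b, 0 ≤ d a b)
    (R : L → ℝ) (hR : ∀ l, 0 ≤ R l) (ω : ℝ) (hω0 : 0 < ω) (hω1 : ω < 1)
    (S S' : Finset L) (hS : 2 ≤ S.card) (hS' : S' ⊆ Sᶜ) (m : ℕ) (hm : 1 ≤ m)
    (hcard : S'.card = m) :
    ω * ∑ l ∈ S ∪ S', R l + (1 - ω) * aggDiv d (S ∪ S') ≤
      (ω * ∑ l ∈ S, R l + (1 - ω) * aggDiv d S) +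
        ω * topSum Sᶜ m R + (1 - ω) * topSum Sᶜ m (fun x => dmin d x S) :=
  stmt7_general d R ω hω0 hω1 S S' hS hS' m hcard
end

section
/- With L, d, D, R, F as above, let S ⊆ L with 2 ≤ |S|, let S_b be a feasible set, and let x ∈ L \ S with D̂ = Σ_{l ∈ S} min( min_{l' ∈ S \ {l}} d(l, l'), d(l, x) ) and d̂ = min_{l ∈ S} d(x, l). If F(S ∪ {x}) > F(S_b), then D̂ > (1/(1−ω)) · ( F(S_b) − ω · ( Σ_{l ∈ S} R(l) + R(x) ) ) − d̂. -/
open Finset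

/-
Adding `x` to `S` contributes `dmin d x S` for the new element and, for every old element `l`,
replaces its nearest-neighbour distance by `min (dmin d l (S.erase l)) (d l x)`; the
inequality is this identity substituted into `F (insert x S) > F S_b` and divided by `1 - ω`.
-/

section

variable {L : Type*} [DecidableEq L] (d : L → L → ℝ)

lemma dmin_insert (l x : L) {T : Finset L} (hT : T.Nonempty) :
    dmin d l (insert x T) = min (d l x) (dmin d l T) := by
  rw [dmin, image_insert, coe_insert]
  exact csInf_insert (T.image (d l)).finite_toSet.bddBelow (by simpa using hT.image (d l))

-- `dmin d l ∅ = sInf ∅ = 0` is a junk value, so every `l ∈ S` needs a neighbour in `S.erase l`.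
lemma aggDiv_insert {S : Finset L} (hS : S.Nontrivial) {x : L} (hx : x ∉ S) :
    aggDiv d (insert x S) = dmin d x S + ∑ l ∈ S, min (dmin d l (S.erase l)) (d l x) := by
  rw [aggDiv, sum_insert hx, erase_insert hx]
  congr 1
  refine sum_congr rfl fun l hl => ?_
  have hlx : x ≠ l := fun h => hx (h ▸ hl)
  rw [erase_insert_of_ne hlx, dmin_insert d l x hS.erase_nonempty, min_comm]

end

theorem stmt13_general {L : Type*} [DecidableEq L] (d : L → L → ℝ)
    (R : L → ℝ) (ω : ℝ) (hω1 : ω < 1)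
    (S S_b : Finset L) (hS : 2 ≤ S.card) (x : L) (hx : x ∉ S)
    (hbeat : ω * ∑ l ∈ insert x S, R l + (1 - ω) * aggDiv d (insert x S) >
      ω * ∑ l ∈ S_b, R l + (1 - ω) * aggDiv d S_b) :
    ∑ l ∈ S, min (dmin d l (S.erase l)) (d l x) >
      (1 / (1 - ω)) *
        ((ω * ∑ l ∈ S_b, R l + (1 - ω) * aggDiv d S_b) - ω * (∑ l ∈ S, R l + R x)) -
        dmin d x S := by
  have hS' : S.Nontrivial := one_lt_card_iff_nontrivial.mp hS
  rw [sum_insert hx, aggDiv_insert d hS' hx] at hbeat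
  have hpos : 0 < 1 - ω := sub_pos.mpr hω1
  rw [gt_iff_lt, sub_lt_iff_lt_add, one_div_mul_eq_div, div_lt_iff₀ hpos]
  linarith

theorem stmt13 {L : Type*} [Fintype L] [DecidableEq L] (d : L → L → ℝ)
    (hsym : ∀ a b, d a b = d b a) (hnn : ∀ a b, 0 ≤ d a b)
    (R : L → ℝ) (hR : ∀ l, 0 ≤ R l) (ω : ℝ) (hω0 : 0 < ω) (hω1 : ω < 1)
    (S S_b : Finset L) (hS : 2 ≤ S.card) (x : L) (hx : x ∉ S)
    (hbeat : ω * ∑ l ∈ insert x S, R l + (1 - ω) * aggDiv d (insert x S) >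
      ω * ∑ l ∈ S_b, R l + (1 - ω) * aggDiv d S_b) :
    ∑ l ∈ S, min (dmin d l (S.erase l)) (d l x) >
      (1 / (1 - ω)) *
        ((ω * ∑ l ∈ S_b, R l + (1 - ω) * aggDiv d S_b) - ω * (∑ l ∈ S, R l + R x)) -
        dmin d x S :=
  stmt13_general d R ω hω1 S S_b hS x hx hbeat
end
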